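/- arXiv:2006.08892 — 6 statements merged into one kernel-verified Lean document; each statement's English description precedes it below -/
import Mathlib

section
/- Let Δ, d₁, d₂ be natural numbers with Δ ≥ d₁ + 1, d₁ ≥ d₂ ≥ 1. Then e^(Δ(d₁+2)) + (d₁+2)·e^(d₁+2) + e^(Δd₂) + (d₂-1)·e^(d₂) > e^(Δ(d₁+1)) + d₁·e^(d₁+1) + e^(Δ(d₂+1)) + d₂·e^(d₂+1). -/
/-!
Moving the pendant vertex changes the index by two independent amounts. The hub terms
`exp (Δ d)` change by `exp (Δ (d + 1)) - exp (Δ d) = (exp Δ - 1) exp (Δ d)`, which grows with `d`,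
so the gain at the larger branch beats the loss at the smaller one. The remaining terms change
by `exp t (t (e - 1) + 1)`, again increasing in `t ≥ 0`, and the larger branch contributes an
extra positive `exp (d₁ + 2)` on top.
-/

open Real

lemma exp_mul_add_one_sub_exp_mul_le {c a b : ℝ} (hc : 0 ≤ c) (hab : a ≤ b) :
    exp (c * (a + 1)) - exp (c * a) ≤ exp (c * (b + 1)) - exp (c * b) := by
  have hstep (t : ℝ) : exp (c * (t + 1)) - exp (c * t) = (exp c - 1) * exp (c * t) := by
    rw [mul_add_one, exp_add]; ring
  rw [hstep, hstep]
  exact mul_le_mul_of_nonneg_left (exp_le_exp.2 (mul_le_mul_of_nonneg_left hab hc))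
    (sub_nonneg.2 (one_le_exp hc))

lemma mul_exp_add_one_sub_mul_exp_le {s t : ℝ} (hs : 0 ≤ s) (hst : s ≤ t) :
    s * exp (s + 1) - (s - 1) * exp s ≤ t * exp (t + 1) - (t - 1) * exp t := by
  have hform (u : ℝ) : u * exp (u + 1) - (u - 1) * exp u = exp u * (u * (exp 1 - 1) + 1) := by
    rw [exp_add]; ring
  have he : 0 ≤ exp 1 - 1 := sub_nonneg.2 (one_le_exp zero_le_one)
  rw [hform, hform]
  exact mul_le_mul (exp_le_exp.2 hst) (by gcongr) (by positivity) (exp_pos t).le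

theorem stmt_2_general (Δ d₁ d₂ : ℕ) (h12 : d₂ ≤ d₁) :
    Real.exp ((Δ : ℝ) * (d₁ + 2)) + ((d₁ : ℝ) + 2) * Real.exp ((d₁ : ℝ) + 2)
      + Real.exp ((Δ : ℝ) * d₂) + ((d₂ : ℝ) - 1) * Real.exp (d₂ : ℝ)
    > Real.exp ((Δ : ℝ) * (d₁ + 1)) + (d₁ : ℝ) * Real.exp ((d₁ : ℝ) + 1)
      + Real.exp ((Δ : ℝ) * (d₂ + 1)) + (d₂ : ℝ) * Real.exp ((d₂ : ℝ) + 1) := by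
  have h21 : (d₂ : ℝ) ≤ d₁ + 1 := by norm_cast; omega
  have hub := exp_mul_add_one_sub_exp_mul_le (Nat.cast_nonneg Δ) h21
  have leaves := mul_exp_add_one_sub_mul_exp_le (Nat.cast_nonneg d₂) h21
  have htwo : (d₁ : ℝ) + 1 + 1 = d₁ + 2 := by ring
  simp only [htwo, add_sub_cancel_right] at hub leaves
  linarith [exp_pos ((d₁ : ℝ) + 2)]

theorem stmt_2 (Δ d₁ d₂ : ℕ) (hΔ : d₁ + 1 ≤ Δ) (h12 : d₂ ≤ d₁) (h2 : 1 ≤ d₂) :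
    Real.exp ((Δ : ℝ) * (d₁ + 2)) + ((d₁ : ℝ) + 2) * Real.exp ((d₁ : ℝ) + 2)
      + Real.exp ((Δ : ℝ) * d₂) + ((d₂ : ℝ) - 1) * Real.exp (d₂ : ℝ)
    > Real.exp ((Δ : ℝ) * (d₁ + 1)) + (d₁ : ℝ) * Real.exp ((d₁ : ℝ) + 1)
      + Real.exp ((Δ : ℝ) * (d₂ + 1)) + (d₂ : ℝ) * Real.exp ((d₂ : ℝ) + 1) :=
  stmt_2_general Δ d₁ d₂ h12
end

section
/- Let x, y be natural numbers with 1 ≤ x, x + 1 < y. Then e^((x+2)y) + (x+1)·e^(x+2) + (y-1)·e^y > e^((x+1)(y+1)) + x·e^(x+1) + y·e^(y+1). -/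
/-!
Put `E = exp ((x+1)(y+1))`. Since `(x+2)y = (x+1)(y+1) + (y-x-1)` and `y - x - 1 ≥ 1`, the first
term on the left is at least `e·E > 2E`. One copy of `E` dominates `y·e^{y+1}`, because
`x + 1 ≥ 2` gives `E ≥ e^{2(y+1)} > (y+1)·e^{y+1}`; the other dominates the first term on the
right. The remaining terms compare termwise.
-/

open Real

theorem mul_exp_lt_exp_two_mul (t : ℝ) : t * exp t < exp (2 * t) := by
  have ht : t < exp t := by linarith [add_one_le_exp t]
  calc t * exp t < exp t * exp t := mul_lt_mul_of_pos_right ht (exp_pos t)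
    _ = exp (2 * t) := by rw [← exp_add, two_mul]

theorem stmt_3 (x y : ℕ) (hx : 1 ≤ x) (hy : x + 1 < y) :
    Real.exp (((x : ℝ) + 2) * y) + ((x : ℝ) + 1) * Real.exp ((x : ℝ) + 2)
      + ((y : ℝ) - 1) * Real.exp (y : ℝ)
    > Real.exp (((x : ℝ) + 1) * ((y : ℝ) + 1)) + (x : ℝ) * Real.exp ((x : ℝ) + 1)
      + (y : ℝ) * Real.exp ((y : ℝ) + 1) := by
  have hx' : (1 : ℝ) ≤ x := by exact_mod_cast hx
  have hy' : (x : ℝ) + 2 ≤ y := by exact_mod_cast hy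
  set E := exp (((x : ℝ) + 1) * ((y : ℝ) + 1))
  have h_first : 2 * E < exp (((x : ℝ) + 2) * y) :=
    calc 2 * E < exp 1 * E := mul_lt_mul_of_pos_right exp_one_gt_two (exp_pos _)
      _ = exp (1 + ((x : ℝ) + 1) * ((y : ℝ) + 1)) := by rw [exp_add]
      _ ≤ exp (((x : ℝ) + 2) * y) := exp_le_exp.2 (by nlinarith)
  have h_last : (y : ℝ) * exp ((y : ℝ) + 1) < E :=
    calc (y : ℝ) * exp ((y : ℝ) + 1) ≤ ((y : ℝ) + 1) * exp ((y : ℝ) + 1) := by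
          gcongr; linarith
      _ < exp (2 * ((y : ℝ) + 1)) := mul_exp_lt_exp_two_mul _
      _ ≤ E := exp_le_exp.2 (by nlinarith)
  have h_middle : (x : ℝ) * exp ((x : ℝ) + 1) ≤ ((x : ℝ) + 1) * exp ((x : ℝ) + 2) := by
    gcongr <;> linarith
  have h_rest : 0 ≤ ((y : ℝ) - 1) * exp (y : ℝ) :=
    mul_nonneg (by linarith) (exp_pos _).le
  linarith
end

section
/- If n ≥ 5 is an odd natural number, then e^((n²-1)/4) + ((n-3)/2)·e^((n-1)/2) + ((n-1)/2)·e^((n+1)/2) > (n-1)·e^(n-1). -/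
/-!
Write `y = n - 1`, so that `(n² - 1)/4 = y (y + 2)/4 = y (y - 2)/4 + y`. Since `y (y - 2)/4 ≥ y/2`
for `y ≥ 4` and `y < e^{y/2}` for every real `y`, the first term alone already exceeds `y e^y`;
the two remaining terms on the left are nonnegative.
-/

open Real

lemma lt_exp_half (y : ℝ) : y < exp (y / 2) := by
  rcases lt_or_ge y 0 with hy | hy
  · exact hy.trans (exp_pos _)
  · have hquad := quadratic_le_exp_of_nonneg (by positivity : 0 ≤ y / 2)
    nlinarith [sq_nonneg (y - 2)]

lemma mul_exp_lt_exp_mul_add_two_div_four {y : ℝ} (hy : 4 ≤ y) :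
    y * exp y < exp (y * (y + 2) / 4) := by
  have hsplit : y * (y + 2) / 4 = y * (y - 2) / 4 + y := by ring
  have hhalf : y / 2 ≤ y * (y - 2) / 4 := by nlinarith
  calc y * exp y < exp (y / 2) * exp y := by gcongr; exact lt_exp_half y
    _ ≤ exp (y * (y - 2) / 4) * exp y := by gcongr
    _ = exp (y * (y + 2) / 4) := by rw [hsplit, exp_add]

theorem stmt_7_general (n : ℕ) (hn : 5 ≤ n) :
    Real.exp (((n : ℝ) ^ 2 - 1) / 4) + (((n : ℝ) - 3) / 2) * Real.exp (((n : ℝ) - 1) / 2)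
      + (((n : ℝ) - 1) / 2) * Real.exp (((n : ℝ) + 1) / 2)
    > ((n : ℝ) - 1) * Real.exp ((n : ℝ) - 1) := by
  have hn' : (5 : ℝ) ≤ n := by exact_mod_cast hn
  have hmain := mul_exp_lt_exp_mul_add_two_div_four (y := (n : ℝ) - 1) (by linarith)
  rw [show ((n : ℝ) - 1) * ((n - 1) + 2) / 4 = ((n : ℝ) ^ 2 - 1) / 4 by ring] at hmain
  have hmid : 0 ≤ (((n : ℝ) - 3) / 2) * exp (((n : ℝ) - 1) / 2) := by
    have : (0 : ℝ) ≤ n - 3 := by linarith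
    positivity
  have hlast : 0 ≤ (((n : ℝ) - 1) / 2) * exp (((n : ℝ) + 1) / 2) := by
    have : (0 : ℝ) ≤ n - 1 := by linarith
    positivity
  linarith

theorem stmt_7 (n : ℕ) (hn : 5 ≤ n) (ho : Odd n) :
    Real.exp (((n : ℝ) ^ 2 - 1) / 4) + (((n : ℝ) - 3) / 2) * Real.exp (((n : ℝ) - 1) / 2)
      + (((n : ℝ) - 1) / 2) * Real.exp (((n : ℝ) + 1) / 2)
    > ((n : ℝ) - 1) * Real.exp ((n : ℝ) - 1) :=
  stmt_7_general n hn
end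

section
/- Let T be a tree on n ≥ 4 vertices in which the distance between every pendant (degree-1) vertex and every vertex of maximum degree is at most 2. Then either T is a double star, or T has a unique vertex of maximum degree and every vertex of T is at distance at most 2 from that vertex. -/
/-
Let `u` be a vertex of maximum degree. A vertex farthest from `u` is a leaf, so the hypothesis
bounds the eccentricity of `u` by 2. If `u` is the only vertex of maximum degree we are done.
Otherwise a second one `w` also has eccentricity at most 2, and since acyclicity forces any
non-backtracking walk of length 3 to realise distance 3, `u` and `w` must be adjacent and every
other vertex must be a leaf hanging from `u` or `w`.
-/

/-- A double star: a graph with exactly two non-pendant vertices, which are adjacent. -/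
def IsDoubleStar {V : Type*} [Fintype V] (T : SimpleGraph V) [DecidableRel T.Adj] : Prop :=
  ∃ u v : V, u ≠ v ∧ T.Adj u v ∧ ∀ w : V, T.degree w ≠ 1 ↔ (w = u ∨ w = v)

open Finset

namespace SimpleGraph

variable {V : Type*} {G : SimpleGraph V}

lemma IsAcyclic.length_eq_dist_of_isPath (hG : G.IsAcyclic) {u v : V} {p : G.Walk u v}
    (hp : p.IsPath) : p.length = G.dist u v := by
  obtain ⟨q, hq, hql⟩ := p.reachable.exists_path_of_dist
  rw [← hql, Subtype.mk.inj ((hG.subsingleton_path u v).elim ⟨p, hp⟩ ⟨q, hq⟩)]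

lemma IsAcyclic.dist_eq_three_of_adj (hG : G.IsAcyclic) {a b c d : V} (hab : G.Adj a b)
    (hbc : G.Adj b c) (hcd : G.Adj c d) (hac : a ≠ c) (hbd : b ≠ d) : G.dist a d = 3 := by
  have hp : (Walk.cons hab (.cons hbc (.cons hcd .nil))).IsPath := by
    rw [hG.isPath_iff_isChain]
    simp [hac, hbd, hab.ne, hbc.ne]
  simpa using (hG.length_eq_dist_of_isPath hp).symm

lemma IsTree.degree_eq_one_of_forall_adj_dist_le (hG : G.IsTree) {u m : V}
    [Fintype (G.neighborSet m)] (hum : u ≠ m)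
    (hmax : ∀ y, G.Adj m y → G.dist u y ≤ G.dist u m) : G.degree m = 1 := by
  obtain ⟨p, hp, hpl⟩ := hG.connected.exists_path_of_dist u m
  have hsupp : ∀ y, G.Adj m y → y ∈ p.support := by
    intro y hy
    obtain ⟨q, hq, hql⟩ := hG.connected.exists_path_of_dist u y
    refine hG.isAcyclic.mem_support_of_ne_mem_support_of_adj_of_isPath hp hq hy fun hmq => ?_
    have hlen := congrArg Walk.length (hG.isAcyclic.path_concat hp hq hy hmq)
    have := hmax y hy
    rw [Walk.length_concat] at hlen
    omega
  have hnil : ¬ p.Nil := by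
    rw [← Walk.length_eq_zero_iff, hpl]
    exact (hG.connected.pos_dist_of_ne hum).ne'
  rw [degree_eq_one_iff_existsUnique_adj]
  exact ⟨p.penultimate, (p.adj_penultimate hnil).symm,
    fun y hy => hG.isAcyclic.eq_penultimate_of_adj_end hp hy (hsupp y hy)⟩

lemma IsTree.exists_degree_eq_one_and_forall_dist_le [Fintype V] [Nontrivial V]
    [DecidableRel G.Adj] (hG : G.IsTree) (u : V) :
    ∃ m, G.degree m = 1 ∧ ∀ v, G.dist u v ≤ G.dist u m := by
  obtain ⟨m, -, hm⟩ := exists_max_image univ (G.dist u) univ_nonempty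
  have hfar : ∀ v, G.dist u v ≤ G.dist u m := fun v => hm v (mem_univ v)
  have hum : u ≠ m := by
    rintro rfl
    obtain ⟨v, hv⟩ := exists_ne u
    exact (hG.connected.pos_dist_of_ne hv.symm).ne' (by simpa using hfar v)
  exact ⟨m, hG.degree_eq_one_of_forall_adj_dist_le hum fun y _ => hfar y, hfar⟩

lemma IsTree.two_le_maxDegree [Fintype V] [DecidableRel G.Adj] (hG : G.IsTree)
    (hcard : 3 ≤ Fintype.card V) : 2 ≤ G.maxDegree := by
  by_contra! hΔ
  have hsum : ∑ v, G.degree v ≤ Fintype.card V := by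
    calc ∑ v, G.degree v ≤ ∑ _v : V, 1 :=
          sum_le_sum fun v _ => (G.degree_le_maxDegree v).trans (by omega)
      _ = Fintype.card V := by simp
  have := hG.card_edgeFinset
  rw [sum_degrees_eq_twice_card_edges] at hsum
  omega

lemma IsAcyclic.degree_eq_one_of_adj_of_forall_dist_le_two (hG : G.IsAcyclic)
    {u w z : V} [Fintype (G.neighborSet z)] (huw : G.Adj u w)
    (hw : ∀ v, G.dist w v ≤ 2) (huz : G.Adj u z) (hzw : z ≠ w) : G.degree z = 1 := by
  rw [degree_eq_one_iff_existsUnique_adj]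
  refine ⟨u, huz.symm, fun y hzy => by_contra fun hyu => ?_⟩
  have := hG.dist_eq_three_of_adj huw.symm huz hzy hzw.symm (Ne.symm hyu)
  have := hw y
  omega

lemma IsTree.adj_of_forall_dist_le_two [Fintype V] [DecidableRel G.Adj] (hG : G.IsTree)
    {u w : V} (huw : u ≠ w) (hu : 2 ≤ G.degree u) (hw : ∀ v, G.dist w v ≤ 2) :
    G.Adj u w := by
  by_contra hnadj
  have hdist : G.dist u w = 2 := by
    have := hG.connected.one_lt_dist_of_ne_of_not_adj huw hnadj
    have := dist_comm (G := G) ▸ hw u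
    omega
  have hedist : G.edist u w = 2 := by
    rw [← (hG.connected u w).coe_dist_eq_edist, hdist]
    rfl
  obtain ⟨-, -, x, hx⟩ := edist_eq_two_iff.1 hedist
  rw [mem_commonNeighbors] at hx
  have hcard : 1 < #(G.neighborFinset u) := by rwa [card_neighborFinset_eq_degree]
  obtain ⟨y, hy, hyx⟩ := exists_mem_ne hcard x
  rw [mem_neighborFinset] at hy
  have := hG.isAcyclic.dist_eq_three_of_adj hx.2 hx.1.symm hy (Ne.symm huw) (Ne.symm hyx)
  have := hw y
  omega

theorem IsTree.isDoubleStar_of_forall_dist_le_two [Fintype V] [DecidableRel G.Adj]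
    (hG : G.IsTree) {u w : V} (huw : u ≠ w) (hu2 : 2 ≤ G.degree u) (hw2 : 2 ≤ G.degree w)
    (hu : ∀ v, G.dist u v ≤ 2) (hw : ∀ v, G.dist w v ≤ 2) : IsDoubleStar G := by
  have hadj := hG.adj_of_forall_dist_le_two huw hu2 hw
  refine ⟨u, w, huw, hadj, fun z => ⟨fun hz => by_contra fun hzuw => hz ?_, ?_⟩⟩
  · push Not at hzuw
    have hdist := hG.dist_eq_dist_add_one_of_adj z hadj
    have := hG.connected.pos_dist_of_ne hzuw.1
    have := hG.connected.pos_dist_of_ne hzuw.2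
    have := dist_comm (G := G) ▸ hu z
    have := dist_comm (G := G) ▸ hw z
    rcases (by omega : G.dist z u = 1 ∨ G.dist z w = 1) with hzu | hzw
    · exact hG.isAcyclic.degree_eq_one_of_adj_of_forall_dist_le_two hadj hw
        (dist_eq_one_iff_adj.1 hzu).symm hzuw.2
    · exact hG.isAcyclic.degree_eq_one_of_adj_of_forall_dist_le_two hadj.symm hu
        (dist_eq_one_iff_adj.1 hzw).symm hzuw.1
  · rintro (rfl | rfl) <;> omega

end SimpleGraph

theorem stmt_11 {V : Type*} [Fintype V] (T : SimpleGraph V) [DecidableRel T.Adj]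
    (hT : T.IsTree) (hn : 4 ≤ Fintype.card V)
    (h : ∀ v u : V, T.degree v = 1 → T.degree u = T.maxDegree → T.dist v u ≤ 2) :
    IsDoubleStar T ∨
      ((∃! u : V, T.degree u = T.maxDegree) ∧
        ∀ u : V, T.degree u = T.maxDegree → ∀ v : V, T.dist u v ≤ 2) := by
  have : Nontrivial V := Fintype.one_lt_card_iff_nontrivial.1 (by omega)
  have hΔ := hT.two_le_maxDegree (by omega)
  have hecc : ∀ u, T.degree u = T.maxDegree → ∀ v, T.dist u v ≤ 2 := by
    intro u hu v
    obtain ⟨m, hm, hfar⟩ := hT.exists_degree_eq_one_and_forall_dist_le u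
    exact (hfar v).trans (SimpleGraph.dist_comm (G := T) ▸ h m u hm hu)
  by_cases huniq : ∀ u w, T.degree u = T.maxDegree → T.degree w = T.maxDegree → u = w
  · obtain ⟨u, hu⟩ := T.exists_maximal_degree_vertex
    exact .inr ⟨⟨u, hu.symm, fun w hw => huniq w u hw hu.symm⟩, hecc⟩
  · push Not at huniq
    obtain ⟨u, w, hu, hw, huw⟩ := huniq
    exact .inl (hT.isDoubleStar_of_forall_dist_le_two huw (hu ▸ hΔ) (hw ▸ hΔ)
      (hecc u hu) (hecc w hw))
end

section
/- Let T be a tree on n vertices containing a path u–v–w where u has maximum degree Δ in T and w is not a pendant vertex. Then the tree T' obtained from T by reattaching all neighbors of w other than v to v satisfies e^{M₂}(T') > e^{M₂}(T); in particular T does not maximize e^{M₂} among trees on n vertices. -/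
/-- The exponential second Zagreb index: `∑_{uv ∈ E(G)} e^(d(u)·d(v))`. -/
noncomputable def expM2 {V : Type*} [Fintype V] (G : SimpleGraph V) : ℝ :=
  letI := Classical.decRel G.Adj
  letI : DecidableEq V := Classical.decEq V
  ∑ e ∈ G.edgeFinset,
    Sym2.lift ⟨fun u v => Real.exp ((G.degree u : ℝ) * (G.degree v : ℝ)),
      fun u v => by simp only []; rw [mul_comm]⟩ e

/-- The double star on `n` vertices with centers `0, 1`, where `0` has the
pendant neighbors `2, …, x+1` and `1` has the remaining vertices as pendant
neighbors. -/
def doubleStarOn (n x : ℕ) : SimpleGraph (Fin n) :=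
  SimpleGraph.fromRel (fun a b =>
    (a.val = 0 ∧ b.val = 1) ∨ (a.val = 0 ∧ 2 ≤ b.val ∧ b.val < x + 2) ∨
      (a.val = 1 ∧ x + 2 ≤ b.val))

/-! Reattaching the neighbours of `w` to `v` makes `w` a leaf, raises the degree of `v` to
`d(v) + d(w) - 1`, and leaves every other degree unchanged, because in a tree `v` and `w` have no
common neighbour. So the weight of every edge that ends up at `v` can only grow, except for the edge
`vw`, whose weight `e^{d(v) d(w)}` may drop to `e^{d(v) + d(w) - 1}`. The edge `uv` pays for that
loss: as `d(w) ≥ 2` the degree of `v` grows by at least one, so its weight grows by a factor of at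
least `e > 2`, and `e^{d(v) d(u)} ≥ e^{d(v) d(w)}` because `d(u)` is the maximum degree. The new
graph is again a tree: it is connected and has as many edges as `T`. -/

open Finset Real

namespace SimpleGraph

variable {V : Type*}

lemma Connected.of_adj_reachable {G H : SimpleGraph V} (hG : G.Connected)
    (h : ∀ a b, G.Adj a b → H.Reachable a b) : H.Connected := by
  have hle : G.Reachable ≤ H.Reachable := by
    rw [reachable_eq_reflTransGen, reachable_eq_reflTransGen] at *
    exact Relation.reflTransGen_closed h
  have := hG.nonempty
  exact ⟨fun a b => hle a b (hG.preconnected a b)⟩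

lemma IsAcyclic.disjoint_neighborSet {G : SimpleGraph V} (hG : G.IsAcyclic) {v w : V}
    (hvw : G.Adj v w) : Disjoint (G.neighborSet v) (G.neighborSet w) := by
  classical
  exact Set.disjoint_left.2 fun x hvx hwx =>
    hG.cliqueFree le_rfl {v, w, x} (is3Clique_triple_iff.2 ⟨hvw, hvx, hwx⟩)

theorem two_nsmul_sum_edgeFinset_lift [Fintype V] {M : Type*} [AddCommMonoid M]
    (G : SimpleGraph V) [DecidableRel G.Adj] (f : V → V → M) (hf : ∀ a b, f a b = f b a) :
    2 • ∑ e ∈ G.edgeFinset, Sym2.lift ⟨f, hf⟩ e = ∑ a, ∑ b, if G.Adj a b then f a b else 0 := by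
  classical
  calc 2 • ∑ e ∈ G.edgeFinset, Sym2.lift ⟨f, hf⟩ e
      = ∑ d : G.Dart, Sym2.lift ⟨f, hf⟩ d.edge := by
        rw [← sum_fiberwise_of_maps_to (g := Dart.edge) (t := G.edgeFinset)
          fun d _ => mem_edgeFinset.2 d.edge_mem, smul_sum]
        refine sum_congr rfl fun e he => ?_
        rw [sum_congr rfl fun d hd => congrArg _ (mem_filter.1 hd).2, sum_const,
          G.dart_edge_fiber_card e (mem_edgeFinset.1 he)]
    _ = ∑ p ∈ univ.filter fun p : V × V => G.Adj p.1 p.2, f p.1 p.2 :=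
        sum_bij' (fun d _ => d.toProd) (fun p hp => ⟨p, (mem_filter.1 hp).2⟩)
          (by simp) (by simp) (by simp) (by simp) (fun _ _ => rfl)
    _ = ∑ a, ∑ b, if G.Adj a b then f a b else 0 := by
        rw [sum_filter, Fintype.sum_prod_type]

lemma sum_sum_eq_of_symm [Fintype V] [DecidableEq V] {M : Type*} [AddCommMonoid M]
    (F : V → V → M) (hF : ∀ a b, F a b = F b a) (hF₀ : ∀ a, F a a = 0) {v w : V} (hvw : v ≠ w) :
    ∑ a, ∑ b, F a b = ∑ a ∈ {v, w}ᶜ, ∑ b ∈ {v, w}ᶜ, F a b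
      + 2 • (∑ b ∈ {v, w}ᶜ, (F v b + F w b) + F v w) := by
  simp only [← sum_compl_add_sum {v, w}, sum_pair hvw, sum_add_distrib, hF₀, add_zero, zero_add,
    sum_congr rfl fun x _ => hF x v, sum_congr rfl fun x _ => hF x w, hF w v]
  abel

/-- The graph `T'`: `G` with every neighbour of `w` other than `v` reattached to `v`. -/
def moveNeighbors (G : SimpleGraph V) (v w : V) : SimpleGraph V :=
  fromRel fun a b => (G.Adj a b ∧ a ≠ w ∧ b ≠ w) ∨ (a = v ∧ (b = w ∨ G.Adj w b))

section moveNeighbors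

variable {G : SimpleGraph V} {v w a b : V}

lemma moveNeighbors_adj_iff (hvw : v ≠ w) : (G.moveNeighbors v w).Adj a b ↔
      ((G.Adj a b ∧ a ≠ w ∧ b ≠ w) ∨ (a = v ∧ G.Adj w b ∧ b ≠ v) ∨
        (b = v ∧ G.Adj w a ∧ a ≠ v) ∨ (a = v ∧ b = w) ∨ (a = w ∧ b = v)) := by
  simp only [moveNeighbors, fromRel_adj]
  grind [G.adj_comm a b, Adj.ne]

lemma moveNeighbors_adj_of_ne (hav : a ≠ v) (haw : a ≠ w) (hbv : b ≠ v) (hbw : b ≠ w) :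
    (G.moveNeighbors v w).Adj a b ↔ G.Adj a b := by
  simp only [moveNeighbors, fromRel_adj]
  grind [G.adj_comm a b, Adj.ne]

lemma moveNeighbors_adj_right (hvw : v ≠ w) : (G.moveNeighbors v w).Adj w b ↔ b = v := by
  simp only [moveNeighbors, fromRel_adj]
  grind

lemma moveNeighbors_adj_left (hvw : G.Adj v w) :
    (G.moveNeighbors v w).Adj v b ↔ b ≠ v ∧ (G.Adj v b ∨ G.Adj w b) := by
  simp only [moveNeighbors, fromRel_adj]
  grind [G.adj_comm b v, hvw.ne]

lemma Connected.moveNeighbors (hG : G.Connected) (hvw : G.Adj v w) :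
    (G.moveNeighbors v w).Connected := by
  have hv : ∀ x, x = v ∨ G.Adj v x ∨ G.Adj w x → (G.moveNeighbors v w).Reachable v x := by
    rintro x hx
    rcases eq_or_ne x v with rfl | hxv
    · rfl
    · exact ((moveNeighbors_adj_left hvw).2 ⟨hxv, hx.resolve_left hxv⟩).reachable
  refine hG.of_adj_reachable fun a b hab => ?_
  by_cases h : a ≠ v ∧ a ≠ w ∧ b ≠ v ∧ b ≠ w
  · exact ((moveNeighbors_adj_of_ne h.1 h.2.1 h.2.2.1 h.2.2.2).2 hab).reachable
  · exact (hv a (by grind [adj_comm])).symm.trans (hv b (by grind [adj_comm]))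

lemma degree_moveNeighbors_right [Fintype V] [DecidableRel (G.moveNeighbors v w).Adj]
    (hvw : v ≠ w) : (G.moveNeighbors v w).degree w = 1 := by
  rw [← card_neighborFinset_eq_degree, card_eq_one]
  exact ⟨v, by ext; simp [moveNeighbors_adj_right hvw]⟩

variable [Fintype V] [DecidableEq V] [DecidableRel G.Adj] [DecidableRel (G.moveNeighbors v w).Adj]

lemma degree_moveNeighbors_left (hvw : G.Adj v w)
    (hdisj : Disjoint (G.neighborSet v) (G.neighborSet w)) :
    (G.moveNeighbors v w).degree v + 1 = G.degree v + G.degree w := by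
  have hN : (G.moveNeighbors v w).neighborFinset v
      = (G.neighborFinset v ∪ G.neighborFinset w).erase v := by
    ext
    simp [moveNeighbors_adj_left hvw]
  rw [← card_neighborFinset_eq_degree, hN,
    card_erase_add_one (mem_union_right _ ((G.mem_neighborFinset _ _).2 hvw.symm)),
    card_union_of_disjoint (by simpa [neighborFinset_def] using hdisj)]
  rfl

lemma degree_moveNeighbors_of_ne (hvw : G.Adj v w)
    (hdisj : Disjoint (G.neighborSet v) (G.neighborSet w)) (hav : a ≠ v) (haw : a ≠ w) :
    (G.moveNeighbors v w).degree a = G.degree a := by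
  have hno : ∀ b, G.Adj v b → ¬ G.Adj w b := fun b => @Set.disjoint_left.1 hdisj b
  have hN : (G.moveNeighbors v w).neighborFinset a
      = (G.neighborFinset a).image fun b => if b = w then v else b := by
    ext b
    simp only [mem_neighborFinset, mem_image]
    grind [moveNeighbors_adj_left hvw, moveNeighbors_adj_right hvw.ne, moveNeighbors_adj_of_ne,
      adj_comm]
  rw [← card_neighborFinset_eq_degree, hN, card_image_of_injOn]
  · rfl
  intro b hb c hc h
  simp only [coe_neighborFinset, mem_neighborSet] at hb hc
  grind [hno a, adj_comm]

lemma sum_degree_moveNeighbors (hvw : G.Adj v w)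
    (hdisj : Disjoint (G.neighborSet v) (G.neighborSet w)) :
    ∑ x, (G.moveNeighbors v w).degree x = ∑ x, G.degree x := by
  rw [← sum_compl_add_sum {v, w}, ← sum_compl_add_sum {v, w}, sum_pair hvw.ne, sum_pair hvw.ne,
    sum_congr rfl fun x hx => degree_moveNeighbors_of_ne hvw hdisj (by grind [mem_compl])
      (by grind [mem_compl]),
    degree_moveNeighbors_right hvw.ne, degree_moveNeighbors_left hvw hdisj]

end moveNeighbors

lemma IsTree.moveNeighbors [Finite V] {G : SimpleGraph V} {v w : V} (hG : G.IsTree)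
    (hvw : G.Adj v w) : (G.moveNeighbors v w).IsTree := by
  have := Fintype.ofFinite V
  classical
  have hdisj := hG.isAcyclic.disjoint_neighborSet hvw
  rw [isTree_iff_connected_and_card] at hG ⊢
  refine ⟨hG.1.moveNeighbors hvw, ?_⟩
  have h := sum_degree_moveNeighbors hvw hdisj
  rw [sum_degrees_eq_twice_card_edges, sum_degrees_eq_twice_card_edges] at h
  simp only [Nat.card_eq_fintype_card, ← edgeFinset_card] at hG ⊢
  omega

noncomputable def expM2Term [Fintype V] (G : SimpleGraph V) [DecidableRel G.Adj] (a b : V) : ℝ :=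
  if G.Adj a b then exp (G.degree a * G.degree b) else 0

lemma expM2Term_comm [Fintype V] (G : SimpleGraph V) [DecidableRel G.Adj] (a b : V) :
    G.expM2Term a b = G.expM2Term b a := by
  simp only [expM2Term, adj_comm, mul_comm]

lemma expM2Term_self [Fintype V] (G : SimpleGraph V) [DecidableRel G.Adj] (a : V) :
    G.expM2Term a a = 0 :=
  if_neg (G.loopless.irrefl a)

lemma two_mul_expM2 [Fintype V] (G : SimpleGraph V) [DecidableRel G.Adj] :
    2 * expM2 G = ∑ a, ∑ b, G.expM2Term a b := by
  rw [expM2, two_mul, ← two_nsmul]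
  unfold expM2Term
  convert two_nsmul_sum_edgeFinset_lift G _ _

section expM2

variable [Fintype V] [DecidableEq V] {G : SimpleGraph V} [DecidableRel G.Adj] {u v w b : V}
  [DecidableRel (G.moveNeighbors v w).Adj]

lemma expM2Term_moveNeighbors_of_ne (hvw : G.Adj v w)
    (hdisj : Disjoint (G.neighborSet v) (G.neighborSet w)) {a : V} (hav : a ≠ v) (haw : a ≠ w)
    (hbv : b ≠ v) (hbw : b ≠ w) :
    (G.moveNeighbors v w).expM2Term a b = G.expM2Term a b := by
  simp only [expM2Term, moveNeighbors_adj_of_ne hav haw hbv hbw,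
    degree_moveNeighbors_of_ne hvw hdisj hav haw, degree_moveNeighbors_of_ne hvw hdisj hbv hbw]

lemma expM2Term_add_le_moveNeighbors (hvw : G.Adj v w)
    (hdisj : Disjoint (G.neighborSet v) (G.neighborSet w)) (hbv : b ≠ v) (hbw : b ≠ w) :
    G.expM2Term v b + G.expM2Term w b
      ≤ (G.moveNeighbors v w).expM2Term v b + (G.moveNeighbors v w).expM2Term w b := by
  have hno : ¬ (G.Adj v b ∧ G.Adj w b) := fun h => Set.disjoint_left.1 hdisj h.1 h.2
  have hdeg := degree_moveNeighbors_left hvw hdisj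
  have hdv : G.degree v ≤ (G.moveNeighbors v w).degree v := by
    have := hvw.degree_pos_right
    omega
  have hdw : G.degree w ≤ (G.moveNeighbors v w).degree v := by
    have := hvw.degree_pos_left
    omega
  have hexp {d : ℕ} (hd : d ≤ (G.moveNeighbors v w).degree v) :
      exp (d * G.degree b) ≤ exp ((G.moveNeighbors v w).degree v * G.degree b) := by
    gcongr
  simp only [expM2Term, moveNeighbors_adj_left hvw, moveNeighbors_adj_right hvw.ne, hbv,
    degree_moveNeighbors_of_ne hvw hdisj hbv hbw]
  split_ifs <;> grind [exp_pos]

lemma expM2Term_add_lt_moveNeighbors (hvw : G.Adj v w)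
    (hdisj : Disjoint (G.neighborSet v) (G.neighborSet w)) (huv : G.Adj u v) (huw : u ≠ w)
    (hwu : G.degree w ≤ G.degree u) (hw : 2 ≤ G.degree w) :
    G.expM2Term v u + G.expM2Term w u + G.expM2Term v w
      < (G.moveNeighbors v w).expM2Term v u + (G.moveNeighbors v w).expM2Term w u
        + (G.moveNeighbors v w).expM2Term v w := by
  have hwu' : ¬ G.Adj w u := Set.disjoint_left.1 hdisj huv.symm
  have hdeg := degree_moveNeighbors_left hvw hdisj
  simp only [expM2Term, huv.symm, hwu', hvw, moveNeighbors_adj_left hvw,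
    moveNeighbors_adj_right hvw.ne, ne_eq, huv.ne, hvw.ne', not_false_eq_true, true_or, and_self,
    if_true, if_false, degree_moveNeighbors_of_ne hvw hdisj huv.ne huw,
    degree_moveNeighbors_right hvw.ne, Nat.cast_one]
  set d := (G.moveNeighbors v w).degree v
  have hgain : (G.degree v * G.degree u : ℝ) + 1 ≤ d * G.degree u := by
    have h1 : (G.degree v : ℝ) + 1 ≤ d := by exact_mod_cast (by omega : G.degree v + 1 ≤ d)
    have h2 : (1 : ℝ) ≤ G.degree u := by exact_mod_cast huv.degree_pos_left
    nlinarith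
  have hexp_wu : exp (G.degree v * G.degree w) ≤ exp (G.degree v * G.degree u) := by
    gcongr
  have he : 2 < exp 1 := by linarith [add_one_lt_exp one_ne_zero]
  calc exp (G.degree v * G.degree u) + 0 + exp (G.degree v * G.degree w)
      ≤ 2 * exp (G.degree v * G.degree u) := by linarith
    _ < exp 1 * exp (G.degree v * G.degree u) := by gcongr
    _ = exp (G.degree v * G.degree u + 1) := by rw [exp_add, mul_comm]
    _ ≤ exp (d * G.degree u) := by gcongr
    _ < exp (d * G.degree u) + 0 + exp (d * 1) := by linarith [exp_pos (d * 1 : ℝ)]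

theorem expM2_lt_expM2_moveNeighbors (hvw : G.Adj v w)
    (hdisj : Disjoint (G.neighborSet v) (G.neighborSet w)) (huv : G.Adj u v) (huw : u ≠ w)
    (hwu : G.degree w ≤ G.degree u) (hw : 2 ≤ G.degree w) :
    expM2 G < expM2 (G.moveNeighbors v w) := by
  have hS {x : V} (hx : x ∈ ({v, w} : Finset V)ᶜ) : x ≠ v ∧ x ≠ w := by simpa [not_or] using hx
  have hu : u ∈ ({v, w} : Finset V)ᶜ := by simp [huv.ne, huw]
  have hfar : ∑ a ∈ ({v, w} : Finset V)ᶜ, ∑ b ∈ ({v, w} : Finset V)ᶜ,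
      (G.moveNeighbors v w).expM2Term a b = ∑ a ∈ ({v, w} : Finset V)ᶜ, ∑ b ∈ ({v, w} : Finset V)ᶜ,
      G.expM2Term a b :=
    sum_congr rfl fun a ha => sum_congr rfl fun b hb =>
      expM2Term_moveNeighbors_of_ne hvw hdisj (hS ha).1 (hS ha).2 (hS hb).1 (hS hb).2
  have hnear : ∑ b ∈ ({v, w} : Finset V)ᶜ.erase u, (G.expM2Term v b + G.expM2Term w b)
      ≤ ∑ b ∈ ({v, w} : Finset V)ᶜ.erase u,
        ((G.moveNeighbors v w).expM2Term v b + (G.moveNeighbors v w).expM2Term w b) :=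
    sum_le_sum fun b hb => expM2Term_add_le_moveNeighbors hvw hdisj
      (hS (mem_of_mem_erase hb)).1 (hS (mem_of_mem_erase hb)).2
  suffices 2 * expM2 G < 2 * expM2 (G.moveNeighbors v w) by linarith
  rw [two_mul_expM2, two_mul_expM2,
    sum_sum_eq_of_symm _ (expM2Term_comm _) (expM2Term_self _) hvw.ne,
    sum_sum_eq_of_symm _ (expM2Term_comm _) (expM2Term_self _) hvw.ne, hfar,
    ← add_sum_erase _ (fun b => G.expM2Term v b + G.expM2Term w b) hu,
    ← add_sum_erase _ (fun b => (G.moveNeighbors v w).expM2Term v b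
      + (G.moveNeighbors v w).expM2Term w b) hu, nsmul_eq_mul, nsmul_eq_mul, Nat.cast_ofNat]
  linarith [expM2Term_add_lt_moveNeighbors hvw hdisj huv huw hwu hw]

end expM2

end SimpleGraph

theorem stmt_12 {V : Type*} [Fintype V] (T : SimpleGraph V) [DecidableRel T.Adj]
    (hT : T.IsTree) (u v w : V) (huv : T.Adj u v) (hvw : T.Adj v w) (huw : u ≠ w)
    (hmax : T.degree u = T.maxDegree) (hw : T.degree w ≠ 1)
    (T' : SimpleGraph V)
    (hT' : ∀ a b : V, T'.Adj a b ↔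
      ((T.Adj a b ∧ a ≠ w ∧ b ≠ w) ∨ (a = v ∧ T.Adj w b ∧ b ≠ v) ∨
        (b = v ∧ T.Adj w a ∧ a ≠ v) ∨ (a = v ∧ b = w) ∨ (a = w ∧ b = v))) :
    expM2 T < expM2 T' ∧ ¬ ∀ S : SimpleGraph V, S.IsTree → expM2 S ≤ expM2 T := by
  classical
  obtain rfl : T' = T.moveNeighbors v w := by
    ext a b
    rw [hT', SimpleGraph.moveNeighbors_adj_iff hvw.ne]
  have hw2 : 2 ≤ T.degree w := by
    have := hvw.degree_pos_right
    omega
  have hlt := SimpleGraph.expM2_lt_expM2_moveNeighbors hvw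
    (hT.isAcyclic.disjoint_neighborSet hvw) huv huw ((T.degree_le_maxDegree w).trans hmax.ge) hw2
  exact ⟨hlt, fun h => (h _ (hT.moveNeighbors hvw)).not_gt hlt⟩
end

section
/- Among all trees on n ≥ 4 vertices, the balanced double star S_{⌊(n-2)/2⌋,⌈(n-2)/2⌉} is the unique tree maximizing the exponential second Zagreb index e^{M₂}. -/
/-!
Two adjacent vertices `u, v` of a tree have disjoint neighbourhoods (a tree has no triangles),
so `d(u) + d(v) ≤ n`. If equality holds for some edge `uv`, every vertex is adjacent to `u` or
`v`, and acyclicity leaves no other edges: the tree is the double star `S_{a,b}` with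
`a = d(u) - 1`, `b = d(v) - 1`, whose index `e^((a+1)(b+1)) + a e^(a+1) + b e^(b+1)` strictly
increases whenever a leaf moves from the larger side to the smaller one. Otherwise
`d(u) + d(v) ≤ n - 1` on every edge, so each of the `n - 1` terms is at most
`e^(((n-1)/2)^2)` by AM-GM, and `(n - 1) e^(((n-1)/2)^2) < e^((n^2-1)/4)` is already below the
first term of the balanced double star.
-/

open Finset Real

theorem Fin.card_subtype_val {n : ℕ} (p : ℕ → Prop) [DecidablePred p] :
    Fintype.card {i : Fin n // p i} = #{k ∈ range n | p k} := by
  rw [Fintype.card_subtype, ← card_map Fin.valEmbedding]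
  congr 1
  ext k
  simp only [mem_map, mem_filter, mem_univ, true_and, Fin.valEmbedding_apply, mem_range]
  exact ⟨fun ⟨i, hi, hik⟩ => hik ▸ ⟨i.isLt, hi⟩, fun ⟨hk, hp⟩ => ⟨⟨k, hk⟩, hp, rfl⟩⟩

theorem Fintype.sum_comp_eq_sum_card_fiber_smul {V W M : Type*} [Fintype V] [Fintype W]
    [DecidableEq W] [AddCommMonoid M] (f : V → W) (g : W → M) :
    ∑ x, g (f x) = ∑ c, Fintype.card {x // f x = c} • g c := by
  rw [← Fintype.sum_fiberwise' f g]
  simp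

theorem Real.self_lt_exp_half (m : ℝ) : m < exp (m / 2) := by
  rcases le_or_gt m 0 with hm | hm
  · exact hm.trans_lt (exp_pos _)
  · nlinarith [quadratic_le_exp_of_nonneg (by positivity : 0 ≤ m / 2), sq_nonneg (m - 4)]

noncomputable def expM2DoubleStar (a b : ℕ) : ℝ :=
  exp ((a + 1) * (b + 1)) + a * exp (a + 1) + b * exp (b + 1)

theorem expM2DoubleStar_zero_lt_shift {b : ℕ} (hb : 0 < b) :
    expM2DoubleStar 0 (b + 1) < expM2DoubleStar 1 b := by
  simp only [expM2DoubleStar, Nat.cast_zero, Nat.cast_add, Nat.cast_one, zero_add, one_mul,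
    zero_mul, add_zero]
  -- with `X = e^(b+1) ≥ e^2 b` the claim follows from `(b + 2) e ≤ (e^2 + 1) b`,
  -- which holds for `b ≥ 1` because `e^2 - 3e + 1 > 0`
  have hb : (1 : ℝ) ≤ b := by exact_mod_cast hb
  have he : 2.7182818283 < exp 1 := exp_one_gt_d9
  have hX1 : exp ((b : ℝ) + 1 + 1) = exp 1 * exp (b + 1) := by rw [← exp_add]; ring_nf
  have hX2 : exp ((1 + 1) * ((b : ℝ) + 1)) = exp (b + 1) * exp (b + 1) := by
    rw [← exp_add]; ring_nf
  have he2 : exp (1 + 1) = exp 1 ^ 2 := by rw [sq, ← exp_add]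
  have hXb : exp 1 ^ 2 * b ≤ exp (b + 1) := by
    have : exp 1 ^ 2 * exp (b - 1) = exp (b + 1) := by rw [sq, ← exp_add, ← exp_add]; ring_nf
    nlinarith [add_one_le_exp ((b : ℝ) - 1), exp_pos 1]
  have hc : (b + 2) * exp 1 ≤ (exp 1 ^ 2 + 1) * b := by
    nlinarith [exp_one_lt_d9,
      mul_nonneg (sub_nonneg.2 hb) (by nlinarith : (0 : ℝ) ≤ exp 1 ^ 2 - exp 1 + 1)]
  rw [hX1, hX2, he2]
  nlinarith [exp_pos 1, mul_le_mul_of_nonneg_right hc (exp_pos ((b : ℝ) + 1)).le,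
    mul_le_mul_of_nonneg_right hXb (exp_pos ((b : ℝ) + 1)).le]

theorem expM2DoubleStar_lt_shift_of_pos {a b : ℕ} (ha : 0 < a) (hab : a < b) :
    expM2DoubleStar a (b + 1) < expM2DoubleStar (a + 1) b := by
  unfold expM2DoubleStar
  push_cast
  have ha : (1 : ℝ) ≤ a := by exact_mod_cast ha
  have hab : (a : ℝ) + 1 ≤ b := by exact_mod_cast hab
  set P := ((a : ℝ) + 1) * (b + 1 + 1)
  -- the first term gains a factor `e ≥ 2`, and `e^P ≥ e^(2(b+2))` absorbs `(b + 1) e^(b+2)`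
  have h1 : exp 1 * exp P ≤ exp ((a + 1 + 1) * (b + 1)) := by
    rw [← exp_add]; exact exp_le_exp.2 (by nlinarith)
  have h2 : exp (b + 1 + 1) * exp (b + 1 + 1) ≤ exp P := by
    rw [← exp_add]; exact exp_le_exp.2 (by nlinarith)
  have h3 : (b : ℝ) + 3 ≤ exp (b + 1 + 1) := by linarith [add_one_le_exp ((b : ℝ) + 1 + 1)]
  have h4 : (a : ℝ) * exp (a + 1) ≤ (a + 1) * exp (a + 1 + 1) :=
    mul_le_mul (by linarith) (exp_le_exp.2 (by linarith)) (exp_pos _).le (by positivity)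
  have he : 2 ≤ exp 1 := by linarith [add_one_le_exp (1 : ℝ)]
  nlinarith [mul_le_mul_of_nonneg_right he (exp_pos P).le,
    mul_le_mul_of_nonneg_right h3 (exp_pos ((b : ℝ) + 1 + 1)).le,
    mul_nonneg (Nat.cast_nonneg b : (0 : ℝ) ≤ b) (exp_pos ((b : ℝ) + 1)).le]

theorem expM2DoubleStar_lt_shift {a b : ℕ} (hab : a < b) :
    expM2DoubleStar a (b + 1) < expM2DoubleStar (a + 1) b := by
  rcases Nat.eq_zero_or_pos a with rfl | ha
  exacts [expM2DoubleStar_zero_lt_shift hab, expM2DoubleStar_lt_shift_of_pos ha hab]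

theorem expM2DoubleStar_lt {a b c d : ℕ} (hac : a < c) (hcd : c ≤ d) (hsum : a + b = c + d) :
    expM2DoubleStar a b < expM2DoubleStar c d := by
  induction c, hac using Nat.le_induction generalizing d with
  | base =>
    obtain rfl : b = d + 1 := by omega
    exact expM2DoubleStar_lt_shift hcd
  | succ c hac ih =>
    exact (ih (d := d + 1) (by omega) (by omega)).trans (expM2DoubleStar_lt_shift (by omega))

theorem mul_exp_lt_expM2DoubleStar {a b : ℕ} (hab : a ≤ b) (hba : b ≤ a + 1) :
    ((a + b + 1 : ℕ) : ℝ) * exp ((((a + b + 1 : ℕ) : ℝ) / 2) ^ 2) < expM2DoubleStar a b := by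
  set m : ℝ := ((a + b + 1 : ℕ) : ℝ)
  have hprod : (m / 2) ^ 2 + m / 2 ≤ (a + 1) * (b + 1) := by
    obtain rfl | rfl : b = a ∨ b = a + 1 := by omega
    all_goals simp only [m]; push_cast; nlinarith
  calc m * exp ((m / 2) ^ 2) < exp (m / 2) * exp ((m / 2) ^ 2) :=
        mul_lt_mul_of_pos_right (self_lt_exp_half m) (exp_pos _)
    _ ≤ exp ((a + 1) * (b + 1)) := by rw [← exp_add]; exact exp_le_exp.2 (by linarith)
    _ ≤ expM2DoubleStar a b :=
        le_add_of_le_of_nonneg (le_add_of_nonneg_right (by positivity)) (by positivity)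

namespace SimpleGraph

variable {V W : Type*}

section DoubleCounting

variable [Fintype V] (G : SimpleGraph V) [DecidableRel G.Adj]

theorem sum_darts_edge {M : Type*} [AddCommMonoid M] (φ : Sym2 V → M) :
    ∑ d : G.Dart, φ d.edge = 2 • ∑ e ∈ G.edgeFinset, φ e := by
  classical
  rw [← sum_fiberwise_of_maps_to (g := Dart.edge) (t := G.edgeFinset) (fun d _ => by simp),
    smul_sum]
  refine sum_congr rfl fun e he => ?_
  rw [sum_congr rfl fun d hd => congrArg φ (mem_filter.1 hd).2, sum_const,
    dart_edge_fiber_card G e (mem_edgeFinset.1 he)]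

theorem sum_darts_eq_sum_neighborFinset {M : Type*} [AddCommMonoid M] (ψ : V → V → M) :
    ∑ d : G.Dart, ψ d.fst d.snd = ∑ x, ∑ y ∈ G.neighborFinset x, ψ x y := by
  rw [sum_sigma']
  exact sum_bij' (fun d _ => ⟨d.fst, d.snd⟩) (fun p hp => ⟨(p.1, p.2), by simpa using hp⟩)
    (by simp) (by simp) (by simp) (by simp) (by simp)

theorem two_mul_expM2_s13 :
    2 * expM2 G = ∑ x, ∑ y ∈ G.neighborFinset x, exp (G.degree x * G.degree y) := by
  classical
  rw [← sum_darts_eq_sum_neighborFinset, two_mul, ← two_nsmul]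
  unfold expM2
  rw [← sum_darts_edge]
  congr! with d
  rw [Dart.edge, Sym2.lift_mk]
  congr!

theorem expM2_le_card_edgeFinset_mul_exp {m : ℕ}
    (h : ∀ u v, G.Adj u v → G.degree u + G.degree v ≤ m) :
    expM2 G ≤ #G.edgeFinset * exp (((m : ℝ) / 2) ^ 2) := by
  have hterm : ∀ x, ∀ y ∈ G.neighborFinset x,
      exp (G.degree x * G.degree y) ≤ exp (((m : ℝ) / 2) ^ 2) := fun x y hy => by
    have hm : (G.degree x : ℝ) + G.degree y ≤ m := by
      exact_mod_cast h x y ((mem_neighborFinset ..).1 hy)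
    exact exp_le_exp.2 (by nlinarith [sq_nonneg ((G.degree x : ℝ) - G.degree y)])
  have hsum := sum_le_sum (s := univ) fun x _ => sum_le_sum (hterm x)
  rw [← two_mul_expM2_s13] at hsum
  simp only [sum_const, card_neighborFinset_eq_degree, nsmul_eq_mul, ← sum_mul] at hsum
  rw [← Nat.cast_sum, sum_degrees_eq_twice_card_edges] at hsum
  push_cast at hsum
  linarith

end DoubleCounting

section Comap

variable [Fintype V] [DecidableEq W]

theorem nonempty_iso_comap_of_card_fiber_eq {V' : Type*} [Fintype V'] (P : SimpleGraph W)
    {f : V → W} {g : V' → W}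
    (h : ∀ c, Fintype.card {x // f x = c} = Fintype.card {y // g y = c}) :
    Nonempty (P.comap f ≃g P.comap g) :=
  let e := Equiv.ofFiberEquiv fun c => Fintype.equivOfCardEq (h c)
  ⟨⟨e, by simp only [comap_adj, e, Equiv.ofFiberEquiv_map, implies_true]⟩⟩

variable [Fintype W] (P : SimpleGraph W) [DecidableRel P.Adj] (f : V → W)

theorem sum_neighborFinset_comap {M : Type*} [AddCommMonoid M] (x : V) (g : W → M) :
    ∑ y ∈ (P.comap f).neighborFinset x, g (f y) =
      ∑ c ∈ P.neighborFinset (f x), Fintype.card {y // f y = c} • g c := by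
  simp only [neighborFinset_eq_filter, sum_filter, comap_adj]
  rw [Fintype.sum_comp_eq_sum_card_fiber_smul f (fun c => if P.Adj (f x) c then g c else 0)]
  simp only [smul_ite, smul_zero]

theorem degree_comap (x : V) :
    (P.comap f).degree x = ∑ c ∈ P.neighborFinset (f x), Fintype.card {y // f y = c} := by
  rw [← card_neighborFinset_eq_degree, card_eq_sum_ones]
  simpa using sum_neighborFinset_comap P f x (fun _ => (1 : ℕ))

end Comap

section DoubleStar

variable [Fintype V]

/-- `doubleStarOn 4 1` is the path `2 - 0 - 1 - 3`; pulling it back along `f` keeps `0` and `1`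
as centres and blows up the leaves `2` and `3` into `a` and `b` leaves. -/
def IsDoubleStar (G : SimpleGraph V) (a b : ℕ) : Prop :=
  ∃ f : V → Fin 4, G = (doubleStarOn 4 1).comap f ∧
    ∀ c, Fintype.card {x // f x = c} = ![1, 1, a, b] c

theorem neighborFinset_doubleStarOn_four_one [DecidableRel (doubleStarOn 4 1).Adj] (c : Fin 4) :
    (doubleStarOn 4 1).neighborFinset c = ![{1, 2}, {0, 3}, {0}, {1}] c := by
  ext d
  rw [mem_neighborFinset]
  fin_cases c <;> fin_cases d <;> simp [doubleStarOn]

theorem IsDoubleStar.expM2_eq {G : SimpleGraph V} {a b : ℕ} (h : G.IsDoubleStar a b) :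
    expM2 G = expM2DoubleStar a b := by
  classical
  obtain ⟨f, rfl, hf⟩ := h
  set D : Fin 4 → ℕ := ![a + 1, b + 1, 1, 1] with hD
  have hdeg : ∀ x, ((doubleStarOn 4 1).comap f).degree x = D (f x) := by
    intro x
    rw [degree_comap, neighborFinset_doubleStarOn_four_one]
    generalize f x = c
    fin_cases c <;> simp [hf, hD, add_comm]
  rw [← mul_right_inj' (two_ne_zero' ℝ), two_mul_expM2_s13]
  simp_rw [hdeg]
  rw [sum_congr rfl fun x _ => sum_neighborFinset_comap _ f x fun c => exp (D (f x) * D c),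
    Fintype.sum_comp_eq_sum_card_fiber_smul f fun c => ∑ d ∈ (doubleStarOn 4 1).neighborFinset c,
      Fintype.card {y // f y = d} • exp (D c * D d)]
  simp [Fin.sum_univ_four, neighborFinset_doubleStarOn_four_one, hf, hD, expM2DoubleStar]
  ring_nf

theorem IsDoubleStar.nonempty_iso {V' : Type*} [Fintype V'] {G : SimpleGraph V}
    {G' : SimpleGraph V'} {a b : ℕ} (h : G.IsDoubleStar a b) (h' : G'.IsDoubleStar a b) :
    Nonempty (G ≃g G') := by
  obtain ⟨f, rfl, hf⟩ := h
  obtain ⟨g, rfl, hg⟩ := h'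
  exact nonempty_iso_comap_of_card_fiber_eq _ fun c => (hf c).trans (hg c).symm

end DoubleStar

theorem isDoubleStar_doubleStarOn {n x : ℕ} (hx : x + 2 ≤ n) :
    (doubleStarOn n x).IsDoubleStar x (n - 2 - x) := by
  let role : ℕ → Fin 4 := fun k =>
    if k = 0 then 0 else if k = 1 then 1 else if k < x + 2 then 2 else 3
  refine ⟨fun i => role i, ?_, fun c => ?_⟩
  · ext i j
    simp only [doubleStarOn, fromRel_adj, comap_adj, role, ne_eq, Fin.ext_iff]
    split_ifs <;> simp <;> omega
  · refine (Fin.card_subtype_val (role · = c)).trans ?_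
    have hfiber : {k ∈ range n | role k = c} = Ico (![0, 1, 2, x + 2] c) (![1, 2, x + 2, n] c) := by
      ext k
      simp only [mem_filter, mem_range, mem_Ico, role]
      fin_cases c <;> simp <;> split_ifs <;> simp <;> omega
    rw [hfiber, Nat.card_Ico]
    fin_cases c <;> simp
    omega

section Acyclic

variable {G : SimpleGraph V} {u v a b : V}

theorem CliqueFree.not_adj_of_adj_of_adj (hG : G.CliqueFree 3) (hab : G.Adj a b)
    (hau : G.Adj a u) : ¬G.Adj b u := fun hbu => by
  classical
  exact hG {a, b, u} (is3Clique_triple_iff.2 ⟨hab, hau, hbu⟩)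

theorem IsAcyclic.not_adj_across_edge (hG : G.IsAcyclic) (huv : G.Adj u v) (hua : G.Adj u a)
    (hbv : G.Adj b v) (hav : a ≠ v) (hbu : b ≠ u) : ¬G.Adj a b := fun hab => by
  have hpath : (Walk.cons hua (Walk.cons hab (Walk.cons hbv Walk.nil))).IsPath := by
    simp [hua.ne, hab.ne, hbv.ne, huv.ne, hav, hbu.symm]
  have := (hG.subsingleton_path u v).elim ⟨_, hpath⟩ (Path.singleton huv)
  simpa using congrArg (fun p : G.Path u v => p.1.length) this

theorem IsAcyclic.adj_iff_eq_of_covering_edge (hG : G.IsAcyclic) (huv : G.Adj u v)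
    (hcover : ∀ w, G.Adj u w ∨ G.Adj v w) (hua : G.Adj u a) (hav : a ≠ v) :
    G.Adj a b ↔ b = u := by
  refine ⟨fun hab => ?_, fun hbu => hbu ▸ hua.symm⟩
  by_contra hbu
  rcases hcover b with hub | hvb
  · exact (hG.cliqueFree le_rfl).not_adj_of_adj_of_adj hua hub hab
  · exact hG.not_adj_across_edge huv hua hvb.symm hav hbu hab

variable [Fintype V] [DecidableRel G.Adj]

theorem CliqueFree.disjoint_neighborFinset (hG : G.CliqueFree 3) (huv : G.Adj u v) :
    Disjoint (G.neighborFinset u) (G.neighborFinset v) :=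
  Finset.disjoint_left.2 fun w hwu hwv => hG.not_adj_of_adj_of_adj huv
    ((mem_neighborFinset G u w).1 hwu) ((mem_neighborFinset G v w).1 hwv)

variable [DecidableEq V]

theorem CliqueFree.degree_add_degree_le (hG : G.CliqueFree 3) (huv : G.Adj u v) :
    G.degree u + G.degree v ≤ Fintype.card V := by
  rw [← card_neighborFinset_eq_degree, ← card_neighborFinset_eq_degree,
    ← card_union_of_disjoint (hG.disjoint_neighborFinset huv)]
  exact card_le_univ _

theorem CliqueFree.adj_or_adj_of_degree_add_degree_eq (hG : G.CliqueFree 3) (huv : G.Adj u v)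
    (hdeg : G.degree u + G.degree v = Fintype.card V) (w : V) : G.Adj u w ∨ G.Adj v w := by
  have : G.neighborFinset u ∪ G.neighborFinset v = univ := by
    refine eq_univ_of_card _ ?_
    rw [card_union_of_disjoint (hG.disjoint_neighborFinset huv), card_neighborFinset_eq_degree,
      card_neighborFinset_eq_degree, hdeg]
  simpa using eq_univ_iff_forall.1 this w

theorem IsAcyclic.isDoubleStar (hG : G.IsAcyclic) (huv : G.Adj u v)
    (hdeg : G.degree u + G.degree v = Fintype.card V) :
    G.IsDoubleStar (G.degree u - 1) (G.degree v - 1) := by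
  have htri : G.CliqueFree 3 := hG.cliqueFree le_rfl
  have hcover := htri.adj_or_adj_of_degree_add_degree_eq huv hdeg
  have hleaf_u : ∀ a, G.Adj u a → a ≠ v → ∀ b, G.Adj a b ↔ b = u :=
    fun a hua hav b => hG.adj_iff_eq_of_covering_edge huv hcover hua hav
  have hleaf_v : ∀ a, ¬G.Adj u a → a ≠ u → ∀ b, G.Adj a b ↔ b = v := fun a hua hau b =>
    hG.adj_iff_eq_of_covering_edge huv.symm (fun w => (hcover w).symm)
      ((hcover a).resolve_left hua) hau
  have hadj_v : ∀ b, G.Adj v b ↔ b = u ∨ b ≠ v ∧ ¬G.Adj u b := fun b =>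
    ⟨fun hvb => or_iff_not_imp_left.2 fun _ =>
      ⟨hvb.ne', fun hub => htri.not_adj_of_adj_of_adj huv hub hvb⟩,
     by rintro (rfl | ⟨-, hub⟩); exacts [huv.symm, (hcover b).resolve_left hub]⟩
  let role : V → Fin 4 := fun w =>
    if w = u then 0 else if w = v then 1 else if G.Adj u w then 2 else 3
  refine ⟨role, ?_, fun c => ?_⟩
  · ext a b
    simp only [comap_adj, role]
    -- each of the sixteen cases is settled by `hleaf_u`, `hleaf_v` or `hadj_v`
    split_ifs <;> simp_all [doubleStarOn, huv.ne]
  · have hfiber : ∀ w, role w = c ↔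
        w ∈ ![{u}, {v}, (G.neighborFinset u).erase v, (G.neighborFinset v).erase u] c := by
      intro w
      simp only [role]
      fin_cases c <;> split_ifs <;> simp_all [huv.ne]
    rw [Fintype.card_congr (Equiv.subtypeEquivRight hfiber), Fintype.card_coe]
    fin_cases c <;> simp [huv, huv.symm]

theorem IsAcyclic.isDoubleStar_or_forall_degree_add_lt (hG : G.IsAcyclic) :
    (∃ a b, a ≤ b ∧ a + b + 2 = Fintype.card V ∧ G.IsDoubleStar a b) ∨
      ∀ u v, G.Adj u v → G.degree u + G.degree v < Fintype.card V := by
  refine or_iff_not_imp_right.2 fun h => ?_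
  push Not at h
  obtain ⟨u, v, huv, hle⟩ := h
  have hsum := le_antisymm ((hG.cliqueFree le_rfl).degree_add_degree_le huv) hle
  have hu := (G.degree_pos_iff_exists_adj u).2 ⟨v, huv⟩
  have hv := (G.degree_pos_iff_exists_adj v).2 ⟨u, huv.symm⟩
  rcases le_total (G.degree u) (G.degree v) with h | h
  · exact ⟨_, _, by omega, by omega, hG.isDoubleStar huv hsum⟩
  · exact ⟨_, _, by omega, by omega, hG.isDoubleStar huv.symm (by omega)⟩

end Acyclic

end SimpleGraph

open SimpleGraph in
theorem stmt_13 (n : ℕ) (hn : 4 ≤ n) (T : SimpleGraph (Fin n)) (hT : T.IsTree) :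
    expM2 T ≤ expM2 (doubleStarOn n ((n - 2) / 2)) ∧
      (expM2 T = expM2 (doubleStarOn n ((n - 2) / 2)) →
        Nonempty (T ≃g doubleStarOn n ((n - 2) / 2))) := by
  classical
  set x := (n - 2) / 2
  have hD : (doubleStarOn n x).IsDoubleStar x (n - 2 - x) := isDoubleStar_doubleStarOn (by omega)
  suffices h : T.IsDoubleStar x (n - 2 - x) ∨ expM2 T < expM2 (doubleStarOn n x) by
    rcases h with hT' | hlt
    · exact ⟨(hT'.expM2_eq.trans hD.expM2_eq.symm).le, fun _ => hT'.nonempty_iso hD⟩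
    · exact ⟨hlt.le, fun heq => absurd heq hlt.ne⟩
  rcases hT.isAcyclic.isDoubleStar_or_forall_degree_add_lt with ⟨a, b, hab, hsum, hT'⟩ | hlt
  · rw [Fintype.card_fin] at hsum
    rcases (show a ≤ x by omega).eq_or_lt with rfl | hax
    · left
      rwa [show b = n - 2 - x by omega] at hT'
    · right
      rw [hT'.expM2_eq, hD.expM2_eq]
      exact expM2DoubleStar_lt hax (by omega) (by omega)
  · right
    have hE := hT.card_edgeFinset
    rw [Fintype.card_fin] at hE hlt
    calc expM2 T ≤ _ := expM2_le_card_edgeFinset_mul_exp T (m := x + (n - 2 - x) + 1)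
          fun u v huv => by have := hlt u v huv; omega
      _ < _ := by
        rw [show #T.edgeFinset = x + (n - 2 - x) + 1 by omega]
        exact mul_exp_lt_expM2DoubleStar (by omega) (by omega)
      _ = _ := hD.expM2_eq.symm
end
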